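/- Let m, k, n, d ∈ ℕ with 1 ≤ k < n/2. If n · 2^{−m−4} ≥ m · 2^m · log(2^{m+3} d) + log( 2 n^k / (k−1)! ), then there exists a multiset 𝕏 ⊂ 𝕄_m^d of cardinality n such that every axis-parallel box B ⊂ [0,1]^d with vol_d(B) > 2^{−m} satisfies #(𝕏 ∩ B) > k; in particular k-dispₘ(𝕏,d) ≤ 2^{−m}. -/

import Mathlib

open MeasureTheory Finset
open scoped Classical

noncomputable section

/-- The `k`-dispersion of a finite point set `P ⊆ [0,1]^d`: the supremum of the volumes of
axis-parallel boxes inside `[0,1]^d` containing at most `k` points of `P`. -/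
def kdisp (d k : ℕ) (P : Finset (Fin d → ℝ)) : ℝ :=
  sSup { v : ℝ | ∃ a b : Fin d → ℝ,
    (∀ i, 0 ≤ a i ∧ a i ≤ b i ∧ b i ≤ 1) ∧
    (P.filter (fun x => ∀ i, x i ∈ Set.Ioo (a i) (b i))).card ≤ k ∧
    v = ∏ i, (b i - a i) }

/-- The minimal `k`-dispersion over all `n`-point subsets of `[0,1]^d`. -/
def kdispStar (d k n : ℕ) : ℝ :=
  sInf { v : ℝ | ∃ P : Finset (Fin d → ℝ),
    (∀ x ∈ P, ∀ i, x i ∈ Set.Icc (0:ℝ) 1) ∧ P.card = n ∧ v = kdisp d k P }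

/-- The `k`-dispersion of a multiset `X` of points of `[0,1]^d`, points being counted
with multiplicity. -/
def kdispM (d k : ℕ) (X : Multiset (Fin d → ℝ)) : ℝ :=
  sSup { v : ℝ | ∃ a b : Fin d → ℝ,
    (∀ i, 0 ≤ a i ∧ a i ≤ b i ∧ b i ≤ 1) ∧
    Multiset.card (X.filter (fun x => ∀ i, x i ∈ Set.Ioo (a i) (b i))) ≤ k ∧
    v = ∏ i, (b i - a i) }

/-- The minimal multiset `k`-dispersion over all multisets of total multiplicity `n`
in `[0,1]^d`. -/
def kdispMStar (d k n : ℕ) : ℝ :=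
  sInf { v : ℝ | ∃ X : Multiset (Fin d → ℝ),
    (∀ x ∈ X, ∀ i, x i ∈ Set.Icc (0:ℝ) 1) ∧ Multiset.card X = n ∧ v = kdispM d k X }

/-- The one-dimensional mesh `𝕄_m = {1/2^m, 2/2^m, …, (2^m-1)/2^m}`. -/
def Mgrid (m : ℕ) : Finset ℝ := (Finset.Icc 1 (2 ^ m - 1)).image fun j : ℕ => (j : ℝ) / 2 ^ m

/-- The mesh `𝕄_m^d`. -/
def Ggrid (m d : ℕ) : Finset (Fin d → ℝ) := Fintype.piFinset fun _ => Mgrid m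

/-- `I` is a subinterval of `[0,1]`. -/
def IsIntervalIn01 (I : Set ℝ) : Prop := I ⊆ Set.Icc 0 1 ∧ I.OrdConnected

/-- Membership of the axis-parallel box `∏_ℓ I ℓ` in the family `Ω_m(s,p)`: the box has
volume exceeding `2^{-m}`, and for every coordinate `ℓ` one has
`s ℓ / 2^m < vol(I ℓ) ≤ (s ℓ + 1)/2^m` and `inf (I ℓ) ∈ [p ℓ - 2^{-m}, p ℓ)`. -/
def memOmega (m : ℕ) {d : ℕ} (s : Fin d → ℕ) (p : Fin d → ℝ) (I : Fin d → Set ℝ) : Prop :=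
  (∀ ℓ, IsIntervalIn01 (I ℓ)) ∧
  ((2:ℝ) ^ m)⁻¹ < (volume (Set.pi Set.univ I)).toReal ∧
  ∀ ℓ, (s ℓ : ℝ) / 2 ^ m < (volume (I ℓ)).toReal ∧
    (volume (I ℓ)).toReal ≤ ((s ℓ : ℝ) + 1) / 2 ^ m ∧
    sInf (I ℓ) ∈ Set.Ico (p ℓ - ((2:ℝ) ^ m)⁻¹) (p ℓ)

/-- `(s,p)` is an admissible index pair, i.e. `(s,p) ∈ 𝕀_m`: the parameters lie in the
allowed ranges and `Ω_m(s,p) ≠ ∅`. -/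
def memIm (m : ℕ) {d : ℕ} (s : Fin d → ℕ) (p : Fin d → ℝ) : Prop :=
  (∀ ℓ, s ℓ < 2 ^ m) ∧
  (∀ ℓ, ∃ j : ℕ, 1 ≤ j ∧ j ≤ 2 ^ m - 1 ∧ p ℓ = (j : ℝ) / 2 ^ m) ∧
  ∃ I, memOmega m s p I

/-- Membership of `z` in the box `𝔹_m(s,p) = ∏_ℓ [p ℓ, p ℓ + (s ℓ - 1)/2^m]`. -/
def memBox (m : ℕ) {d : ℕ} (s : Fin d → ℕ) (p : Fin d → ℝ) (z : Fin d → ℝ) : Prop :=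
  ∀ ℓ, z ℓ ∈ Set.Icc (p ℓ) (p ℓ + ((s ℓ : ℝ) - 1) / 2 ^ m)

/-!
A box `B ⊆ [0,1]^d` with `vol B > 2^{-m}` contains every point of `𝕄_m^d` whose index vector lies
in some *test box* `∏ [a_ℓ, b_ℓ]` of grid indices. A test box holds at least a `2^{-m-3}` fraction
of the grid, and there are at most `2 (2^{m+3} d)^{m 2^m}` test boxes: almost all coordinates of a
test box must be full, which is counted by giving each coordinate a weight in `{0, 1, 2}` and
bounding the total weight. Among the `(2^m - 1)^{dn}` sequences of `n` grid points, at most a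
`C(n,k) (1 - 2^{-m-3})^{n-k}` fraction meet a given test box at most `k` times; the hypothesis on
`n` makes the union bound over all test boxes smaller than `1`.
-/

open Fintype

section Counting

variable {α : Type*} [DecidableEq α]

theorem card_filter_card_filter_mem_le {G C : Finset α} (hCG : C ⊆ G) {n k : ℕ} (hkn : k ≤ n) :
    #{f ∈ piFinset (fun _ : Fin n => G) | #{i | f i ∈ C} ≤ k}
      ≤ n.choose k * #G ^ k * (#G - #C) ^ (n - k) := by
  let B : Finset (Fin n) → Finset (Fin n → α) := fun s =>
    piFinset fun i => if i ∈ s then G else G \ C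
  have hsub : {f ∈ piFinset (fun _ : Fin n => G) | #{i | f i ∈ C} ≤ k}
      ⊆ (powersetCard k univ).biUnion B := by
    intro f hf
    rw [mem_filter, mem_piFinset] at hf
    obtain ⟨s, hhit, -, hs⟩ := exists_subsuperset_card_eq (subset_univ _) hf.2 (by simpa using hkn)
    refine mem_biUnion.2 ⟨s, mem_powersetCard.2 ⟨subset_univ s, hs⟩, mem_piFinset.2 fun i => ?_⟩
    by_cases hi : i ∈ s
    · simpa [hi] using hf.1 i
    · simpa [hi, hf.1 i] using fun h => hi (hhit (by simpa using h))
  have hB : ∀ s ∈ powersetCard k (univ : Finset (Fin n)),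
      #(B s) = #G ^ k * (#G - #C) ^ (n - k) := by
    intro s hs
    rw [mem_powersetCard] at hs
    simp only [B, card_piFinset, apply_ite card, card_sdiff_of_subset hCG, prod_ite, prod_const]
    simp [hs.2, filter_not, card_sdiff_of_subset]
  calc _ ≤ #((powersetCard k univ).biUnion B) := card_le_card hsub
    _ ≤ ∑ s ∈ powersetCard k univ, #(B s) := card_biUnion_le
    _ = n.choose k * #G ^ k * (#G - #C) ^ (n - k) := by
      rw [sum_congr rfl hB, sum_const, card_powersetCard, card_univ, Fintype.card_fin, smul_eq_mul,
        mul_assoc]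

theorem exists_forall_lt_card_filter_mem {ι : Type*} {G : Finset α} (hG : G.Nonempty)
    {A : Finset ι} {C : ι → Finset α} {n k : ℕ} {p : ℝ} (hkn : k ≤ n)
    (hCG : ∀ c ∈ A, C c ⊆ G) (hp : ∀ c ∈ A, p * #G ≤ #(C c))
    (hA : #A * n.choose k * (1 - p) ^ (n - k) < 1) :
    ∃ f ∈ piFinset (fun _ : Fin n => G), ∀ c ∈ A, k < #{i | f i ∈ C c} := by
  by_contra! hbad
  have hcover : piFinset (fun _ : Fin n => G)
      ⊆ A.biUnion fun c => {f ∈ piFinset (fun _ : Fin n => G) | #{i | f i ∈ C c} ≤ k} := by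
    intro f hf
    obtain ⟨c, hc, hfc⟩ := hbad f hf
    exact mem_biUnion.2 ⟨c, hc, mem_filter.2 ⟨hf, hfc⟩⟩
  have hbound : ∀ c ∈ A, (#{f ∈ piFinset (fun _ : Fin n => G) | #{i | f i ∈ C c} ≤ k} : ℝ)
      ≤ n.choose k * (1 - p) ^ (n - k) * #G ^ n := by
    intro c hc
    have hcomp : ((#G - #(C c) : ℕ) : ℝ) ≤ (1 - p) * #G := by
      rw [Nat.cast_sub (card_le_card (hCG c hc))]
      linarith [hp c hc]
    calc _ ≤ ((n.choose k * #G ^ k * (#G - #(C c)) ^ (n - k) : ℕ) : ℝ) :=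
          Nat.cast_le.2 (card_filter_card_filter_mem_le (hCG c hc) hkn)
      _ ≤ n.choose k * #G ^ k * ((1 - p) * #G) ^ (n - k) := by
          push_cast
          gcongr
      _ = n.choose k * (1 - p) ^ (n - k) * #G ^ n := by
          rw [mul_pow, ← Nat.add_sub_cancel' hkn, pow_add, Nat.add_sub_cancel_left]
          ring
  have := calc ((#G ^ n : ℕ) : ℝ) = #(piFinset fun _ : Fin n => G) := by simp
    _ ≤ ∑ c ∈ A, (#{f ∈ piFinset (fun _ : Fin n => G) | #{i | f i ∈ C c} ≤ k} : ℝ) := by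
        exact_mod_cast (card_le_card hcover).trans card_biUnion_le
    _ ≤ ∑ c ∈ A, (n.choose k * (1 - p) ^ (n - k) * #G ^ n : ℝ) := sum_le_sum hbound
    _ = #A * n.choose k * (1 - p) ^ (n - k) * #G ^ n := by rw [sum_const, nsmul_eq_mul]; ring
    _ < #G ^ n := mul_lt_of_lt_one_left (by positivity) hA
  simp at this

theorem card_mul_pow_le_sum_pow_pow {β : Type*} {d : ℕ} {P : Finset β} {A : Finset (Fin d → β)}
    (hA : A ⊆ piFinset fun _ => P) (w : β → ℕ) {B : ℕ} (hB : ∀ c ∈ A, ∑ ℓ, w (c ℓ) ≤ B)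
    {t : ℝ} (ht0 : 0 ≤ t) (ht1 : t ≤ 1) :
    #A * t ^ B ≤ (∑ q ∈ P, t ^ w q) ^ d :=
  calc #A * t ^ B = ∑ c ∈ A, t ^ B := by rw [sum_const, nsmul_eq_mul]
    _ ≤ ∑ c ∈ A, ∏ ℓ, t ^ w (c ℓ) := sum_le_sum fun c hc => by
        rw [prod_pow_eq_pow_sum]; exact pow_le_pow_of_le_one ht0 ht1 (hB c hc)
    _ ≤ ∑ c ∈ piFinset fun _ => P, ∏ ℓ, t ^ w (c ℓ) :=
        sum_le_sum_of_subset_of_nonneg hA fun _ _ _ => by positivity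
    _ = ∏ _ℓ : Fin d, ∑ q ∈ P, t ^ w q :=
        (prod_univ_sum (κ := fun _ => β) (fun _ => P) fun _ q => t ^ w q).symm
    _ = (∑ q ∈ P, t ^ w q) ^ d := by simp

end Counting

section RealInequalities

open Real

theorem sum_sub_one_le_prod_sub_one {ι : Type*} (s : Finset ι) {x : ι → ℝ}
    (hx : ∀ i ∈ s, 1 ≤ x i) : ∑ i ∈ s, (x i - 1) ≤ ∏ i ∈ s, x i - 1 := by
  induction s using Finset.cons_induction with
  | empty => simp
  | cons a s ha ih =>
    rw [sum_cons, prod_cons]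
    have hxa : 1 ≤ x a := hx a (mem_cons_self a s)
    have hs : 1 ≤ ∏ i ∈ s, x i := Finset.one_le_prod fun i hi => hx i (mem_cons_of_mem hi)
    nlinarith [ih fun i hi => hx i (mem_cons_of_mem hi)]

theorem sub_one_mul_le_mul_sub_one_mul_exp {M u : ℝ} (hu : 2 ≤ u) (huM : u ≤ M) :
    (M - 1) * u ≤ M * (u - 1) * exp (2 / M * (M / u - 1)) := by
  have hM : 0 < M := by linarith
  calc (M - 1) * u ≤ M * (u - 1) * (2 / M * (M / u - 1) + 1) := by
        rw [← sub_nonneg]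
        have : M * (u - 1) * (2 / M * (M / u - 1) + 1) - (M - 1) * u = (M - u) * (u - 2) / u := by
          field_simp; ring
        rw [this]
        exact div_nonneg (mul_nonneg (by linarith) (by linarith)) (by linarith)
    _ ≤ M * (u - 1) * exp (2 / M * (M / u - 1)) := by
        gcongr
        · nlinarith
        · exact add_one_le_exp _

theorem pow_sub_one_le_mul_prod_sub_one {d : ℕ} {M : ℝ} {u : Fin d → ℝ} (hu : ∀ ℓ, 2 ≤ u ℓ)
    (huM : ∀ ℓ, u ℓ ≤ M) (hprod : M ^ d ≤ M * ∏ ℓ, u ℓ) :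
    (M - 1) ^ d ≤ 8 * M * ∏ ℓ, (u ℓ - 1) := by
  have hM : 0 < M := by
    rcases d with _ | d
    · simp at hprod; linarith
    · linarith [hu 0, huM 0]
  have hU : 0 < ∏ ℓ, u ℓ := prod_pos fun ℓ _ => by linarith [hu ℓ]
  have hx : ∀ ℓ, 1 ≤ M / u ℓ := fun ℓ => (one_le_div (by linarith [hu ℓ])).2 (huM ℓ)
  have hxprod : ∏ ℓ, M / u ℓ ≤ M := by
    rwa [prod_div_distrib, prod_const, card_univ, Fintype.card_fin, div_le_iff₀ hU]
  have hsum : 2 / M * ∑ ℓ, (M / u ℓ - 1) ≤ 2 := by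
    have := sum_sub_one_le_prod_sub_one univ fun ℓ _ => hx ℓ
    rw [div_mul_eq_mul_div, div_le_iff₀ hM]
    linarith
  have hexp : exp 2 ≤ 8 := by
    have : exp 2 = exp 1 ^ 2 := by rw [← exp_nat_mul]; norm_num
    nlinarith [exp_one_lt_d9, exp_pos 1]
  have hQ : 0 ≤ ∏ ℓ, (u ℓ - 1) := prod_nonneg fun ℓ _ => by linarith [hu ℓ]
  have key : (M - 1) ^ d * ∏ ℓ, u ℓ ≤ (8 * M * ∏ ℓ, (u ℓ - 1)) * ∏ ℓ, u ℓ :=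
    calc (M - 1) ^ d * ∏ ℓ, u ℓ = ∏ ℓ, (M - 1) * u ℓ := by simp [prod_mul_distrib]
      _ ≤ ∏ ℓ, M * (u ℓ - 1) * exp (2 / M * (M / u ℓ - 1)) :=
          prod_le_prod (fun ℓ _ => by nlinarith [hu ℓ, huM ℓ]) fun ℓ _ =>
            sub_one_mul_le_mul_sub_one_mul_exp (hu ℓ) (huM ℓ)
      _ = M ^ d * (∏ ℓ, (u ℓ - 1)) * exp (2 / M * ∑ ℓ, (M / u ℓ - 1)) := by
          rw [prod_mul_distrib, prod_mul_distrib, prod_const, card_univ, Fintype.card_fin,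
            ← exp_sum, mul_sum]
      _ ≤ (M * ∏ ℓ, u ℓ) * (∏ ℓ, (u ℓ - 1)) * 8 := by
          gcongr
          exact (exp_le_exp.2 hsum).trans hexp
      _ = (8 * M * ∏ ℓ, (u ℓ - 1)) * ∏ ℓ, u ℓ := by ring
  exact le_of_mul_le_mul_right key hU

theorem exp_le_div_pow {M j : ℕ} {w : ℝ} (hw : 0 < w) (hwj : w + j ≤ M) :
    exp j ≤ (M / w) ^ M := by
  have hjM : (j : ℝ) < M := by linarith
  have hM : (0 : ℝ) < M := by linarith [(Nat.cast_nonneg j : (0 : ℝ) ≤ j)]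
  have hpos : 0 < 1 - (j : ℝ) / M := by rw [sub_pos, div_lt_one hM]; exact hjM
  calc exp j = (exp (-(j : ℝ)))⁻¹ := by rw [exp_neg, inv_inv]
    _ ≤ ((1 - (j : ℝ) / M) ^ M)⁻¹ := by
        gcongr
        exact one_sub_div_pow_le_exp_neg hjM.le
    _ = ((M : ℝ) / (M - j)) ^ M := by rw [← inv_pow]; congr 1; field_simp
    _ ≤ ((M : ℝ) / w) ^ M := by gcongr; linarith

theorem one_sub_pow_lt_exp_neg {p : ℝ} (hp0 : 0 < p) (hp1 : p ≤ 1) {j : ℕ} (hj : j ≠ 0) :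
    (1 - p) ^ j < exp (-(j * p)) := by
  calc (1 - p) ^ j < exp (-p) ^ j := pow_lt_pow_left₀ (one_sub_lt_exp_neg hp0.ne') (by linarith) hj
    _ = exp (-(j * p)) := by rw [← exp_nat_mul]; ring_nf

end RealInequalities

section Grid

variable {M d : ℕ}

def gridPairs (M : ℕ) : Finset (ℕ × ℕ) :=
  (Icc 1 (M - 1) ×ˢ Icc 1 (M - 1)).filter fun q => q.1 ≤ q.2

-- The grid points `j / M` in the open interval `((a - 1) / M, (b + 1) / M)`, of length
-- `gridWidth (a, b) / M`, are exactly those with `a ≤ j ≤ b`.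
def gridWidth (q : ℕ × ℕ) : ℕ := q.2 - q.1 + 2

def idxGrid (M d : ℕ) : Finset (Fin d → ℕ) := piFinset fun _ => Icc 1 (M - 1)

def idxBox (c : Fin d → ℕ × ℕ) : Finset (Fin d → ℕ) := piFinset fun ℓ => Icc (c ℓ).1 (c ℓ).2

-- The condition says that the hull `∏ ((a_ℓ - 1) / M, (b_ℓ + 1) / M)` has volume `> 1 / M`.
def testBoxes (M d : ℕ) : Finset (Fin d → ℕ × ℕ) :=
  (piFinset fun _ => gridPairs M).filter fun c => M ^ d < M * ∏ ℓ, gridWidth (c ℓ)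

def gridWeight (M : ℕ) (q : ℕ × ℕ) : ℕ := min 2 (M - gridWidth q)

theorem mem_gridPairs {q : ℕ × ℕ} : q ∈ gridPairs M ↔ 1 ≤ q.1 ∧ q.1 ≤ q.2 ∧ q.2 ≤ M - 1 := by
  simp only [gridPairs, mem_filter, mem_product, mem_Icc]
  omega

theorem gridWidth_le_of_mem_gridPairs {q : ℕ × ℕ} (hq : q ∈ gridPairs M) : gridWidth q ≤ M := by
  rw [mem_gridPairs] at hq; unfold gridWidth; omega

theorem idxBox_subset_idxGrid {c : Fin d → ℕ × ℕ} (hc : c ∈ testBoxes M d) :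
    idxBox c ⊆ idxGrid M d := by
  simp only [testBoxes, mem_filter, mem_piFinset, mem_gridPairs] at hc
  exact piFinset_subset _ _ fun ℓ => Icc_subset_Icc (hc.1 ℓ).1 (hc.1 ℓ).2.2

theorem inv_mul_card_idxGrid_le_card_idxBox {c : Fin d → ℕ × ℕ} (hc : c ∈ testBoxes M d) :
    (8 * M : ℝ)⁻¹ * #(idxGrid M d) ≤ #(idxBox c) := by
  simp only [testBoxes, mem_filter, mem_piFinset] at hc
  have hM : 0 < M := Nat.pos_of_ne_zero fun h => by simp [h] at hc
  have hgrid : (#(idxGrid M d) : ℝ) = ((M : ℝ) - 1) ^ d := by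
    simp [idxGrid, Nat.cast_sub (Nat.one_le_iff_ne_zero.2 hM.ne')]
  have hbox : (#(idxBox c) : ℝ) = ∏ ℓ, ((gridWidth (c ℓ) : ℝ) - 1) := by
    simp only [idxBox, card_piFinset, Nat.card_Icc, Nat.cast_prod]
    refine prod_congr rfl fun ℓ _ => ?_
    have : (c ℓ).2 + 1 - (c ℓ).1 = gridWidth (c ℓ) - 1 := by
      have := mem_gridPairs.1 (hc.1 ℓ); unfold gridWidth; omega
    rw [this, Nat.cast_sub (by unfold gridWidth; omega), Nat.cast_one]
  rw [hgrid, hbox, inv_mul_le_iff₀ (by positivity)]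
  refine pow_sub_one_le_mul_prod_sub_one (fun ℓ => ?_) (fun ℓ => ?_) ?_
  · unfold gridWidth; exact_mod_cast Nat.le_add_left 2 _
  · exact_mod_cast gridWidth_le_of_mem_gridPairs (hc.1 ℓ)
  · exact_mod_cast hc.2.le

theorem two_pow_gridWeight_le {q : ℕ × ℕ} (hq : q ∈ gridPairs M) :
    (2 : ℝ) ^ gridWeight M q ≤ (M / gridWidth q) ^ M := by
  have hw : gridWidth q + gridWeight M q ≤ M := by
    have := gridWidth_le_of_mem_gridPairs hq; unfold gridWeight; omega
  calc (2 : ℝ) ^ gridWeight M q ≤ Real.exp 1 ^ gridWeight M q := by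
        gcongr; linarith [Real.add_one_le_exp 1]
    _ = Real.exp (gridWeight M q) := by rw [← Real.exp_nat_mul, mul_one]
    _ ≤ (M / gridWidth q) ^ M :=
        exp_le_div_pow (by unfold gridWidth; positivity) (by exact_mod_cast hw)

theorem sum_gridWeight_le {m : ℕ} {c : Fin d → ℕ × ℕ} (hc : c ∈ testBoxes (2 ^ m) d) :
    ∑ ℓ, gridWeight (2 ^ m) (c ℓ) ≤ m * 2 ^ m := by
  simp only [testBoxes, mem_filter, mem_piFinset] at hc
  have hW : (0 : ℝ) < ∏ ℓ, (gridWidth (c ℓ) : ℝ) :=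
    prod_pos fun ℓ _ => by unfold gridWidth; positivity
  have hratio : ((2 ^ m : ℕ) : ℝ) ^ d / ∏ ℓ, (gridWidth (c ℓ) : ℝ) ≤ (2 ^ m : ℕ) := by
    rw [div_le_iff₀ hW]; exact_mod_cast hc.2.le
  rw [← pow_le_pow_iff_right₀ (one_lt_two : (1 : ℝ) < 2)]
  calc (2 : ℝ) ^ ∑ ℓ, gridWeight (2 ^ m) (c ℓ) = ∏ ℓ, (2 : ℝ) ^ gridWeight (2 ^ m) (c ℓ) :=
        (prod_pow_eq_pow_sum _ _ _).symm
    _ ≤ ∏ ℓ, (((2 ^ m : ℕ) : ℝ) / gridWidth (c ℓ)) ^ 2 ^ m :=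
        prod_le_prod (fun _ _ => by positivity) fun ℓ _ => two_pow_gridWeight_le (hc.1 ℓ)
    _ = (((2 ^ m : ℕ) : ℝ) ^ d / ∏ ℓ, (gridWidth (c ℓ) : ℝ)) ^ 2 ^ m := by
        rw [prod_pow, prod_div_distrib, prod_const, card_univ, Fintype.card_fin]
    _ ≤ ((2 ^ m : ℕ) : ℝ) ^ 2 ^ m := by gcongr
    _ = 2 ^ (m * 2 ^ m) := by push_cast; rw [pow_mul]

theorem sum_pow_gridWeight_le {t : ℝ} (ht : 0 ≤ t) :
    ∑ q ∈ gridPairs M, t ^ gridWeight M q ≤ 1 + 2 * t + (M : ℝ) ^ 2 * t ^ 2 := by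
  -- Only the full interval `(1, M - 1)` has weight `0`, and only the pairs in `E` have weight `1`.
  let E : Finset (ℕ × ℕ) := {(1, M - 2), (2, M - 1)}
  have hpoint : ∀ q ∈ gridPairs M,
      t ^ gridWeight M q
        ≤ (if (1, M - 1) = q then 1 else 0) + (if q ∈ E then t else 0) + t ^ 2 := by
    rintro ⟨a, b⟩ hq
    rw [mem_gridPairs] at hq
    have h0 : 0 ≤ (if (1, M - 1) = (a, b) then (1 : ℝ) else 0) := by split_ifs <;> norm_num
    have h1 : 0 ≤ (if (a, b) ∈ E then t else 0) := by split_ifs <;> positivity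
    rcases (by unfold gridWidth; omega :
        gridWidth (a, b) = M ∨ gridWidth (a, b) + 1 = M ∨ gridWidth (a, b) + 2 ≤ M) with h | h | h
    · have hab : (1, M - 1) = (a, b) := by unfold gridWidth at h; ext <;> simp <;> omega
      rw [if_pos hab, show gridWeight M (a, b) = 0 by unfold gridWeight; omega, pow_zero]
      nlinarith
    · have hab : (a, b) ∈ E := by unfold gridWidth at h; simp [E]; omega
      rw [if_pos hab, show gridWeight M (a, b) = 1 by unfold gridWeight; omega, pow_one]
      nlinarith
    · rw [show gridWeight M (a, b) = 2 by unfold gridWeight; omega]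
      linarith
  have hcard : #(gridPairs M) ≤ M ^ 2 :=
    calc #(gridPairs M) ≤ #(Icc 1 (M - 1) ×ˢ Icc 1 (M - 1)) := card_filter_le _ _
      _ ≤ M ^ 2 := by rw [card_product, Nat.card_Icc, sq]; gcongr <;> omega
  calc ∑ q ∈ gridPairs M, t ^ gridWeight M q
      ≤ ∑ q ∈ gridPairs M, ((if (1, M - 1) = q then 1 else 0) + (if q ∈ E then t else 0) + t ^ 2) :=
        sum_le_sum hpoint
    _ ≤ 1 + #E * t + (M : ℝ) ^ 2 * t ^ 2 := by
        rw [sum_add_distrib, sum_add_distrib, Finset.sum_ite_eq, Finset.sum_ite_mem, sum_const,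
          sum_const, nsmul_eq_mul, nsmul_eq_mul]
        gcongr
        · split_ifs <;> norm_num
        · exact inter_subset_right
        · exact_mod_cast hcard
    _ ≤ 1 + 2 * t + (M : ℝ) ^ 2 * t ^ 2 := by
        gcongr
        exact_mod_cast card_le_two

end Grid

theorem card_testBoxes_le {m d : ℕ} (hd : 1 ≤ d) :
    (#(testBoxes (2 ^ m) d) : ℝ) ≤ 2 * (2 ^ (m + 3) * d) ^ (m * 2 ^ m) := by
  set K : ℝ := 2 ^ (m + 3) * d
  have hd' : (1 : ℝ) ≤ d := by exact_mod_cast hd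
  have hM : (1 : ℝ) ≤ 2 ^ m := one_le_pow₀ one_le_two
  have hK : K = 8 * 2 ^ m * d := by simp only [K, pow_add]; ring
  have hK1 : 1 ≤ K := by rw [hK]; nlinarith
  have hsmall : d * (2 * K⁻¹ + ((2 ^ m : ℕ) : ℝ) ^ 2 * K⁻¹ ^ 2) ≤ Real.log 2 := by
    have : d * (2 * K⁻¹ + ((2 ^ m : ℕ) : ℝ) ^ 2 * K⁻¹ ^ 2) = (4 * 2 ^ m)⁻¹ + (64 * (d : ℝ))⁻¹ := by
      rw [hK]; push_cast; field_simp; ring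
    rw [this]
    have h1 : (4 * 2 ^ m : ℝ)⁻¹ ≤ 1 / 4 := by rw [one_div]; gcongr; linarith
    have h2 : (64 * (d : ℝ))⁻¹ ≤ 1 / 64 := by rw [one_div]; gcongr; linarith
    linarith [Real.log_two_gt_d9]
  have hsum : (∑ q ∈ gridPairs (2 ^ m), K⁻¹ ^ gridWeight (2 ^ m) q) ^ d ≤ 2 :=
    calc _ ≤ (1 + 2 * K⁻¹ + ((2 ^ m : ℕ) : ℝ) ^ 2 * K⁻¹ ^ 2) ^ d := by
          gcongr
          exact sum_pow_gridWeight_le (by positivity)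
      _ ≤ Real.exp (2 * K⁻¹ + ((2 ^ m : ℕ) : ℝ) ^ 2 * K⁻¹ ^ 2) ^ d := by
          gcongr
          linarith [Real.add_one_le_exp (2 * K⁻¹ + ((2 ^ m : ℕ) : ℝ) ^ 2 * K⁻¹ ^ 2)]
      _ ≤ Real.exp (Real.log 2) := by rw [← Real.exp_nat_mul]; exact Real.exp_le_exp.2 hsmall
      _ = 2 := Real.exp_log two_pos
  have key := card_mul_pow_le_sum_pow_pow (A := testBoxes (2 ^ m) d) (filter_subset _ _)
    (gridWeight (2 ^ m)) (fun c hc => sum_gridWeight_le hc) (by positivity) (inv_le_one_of_one_le₀ hK1)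
  rw [inv_pow, ← div_eq_mul_inv, div_le_iff₀ (by positivity)] at key
  linarith [mul_le_mul_of_nonneg_right hsum (by positivity : (0 : ℝ) ≤ K ^ (m * 2 ^ m))]

section Geometry

theorem exists_mem_gridPairs_forall_div_mem {M : ℕ} {J : Set ℝ} (hJ : IsIntervalIn01 J)
    (hvol : 1 < M * (volume J).toReal) :
    ∃ q ∈ gridPairs M, M * (volume J).toReal ≤ gridWidth q ∧
      ∀ j ∈ Icc q.1 q.2, (j : ℝ) / M ∈ J := by
  have hJne : J.Nonempty := Set.nonempty_iff_ne_empty.2 fun h => by norm_num [h] at hvol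
  have hbdd : BddBelow J ∧ BddAbove J :=
    ⟨⟨0, fun x hx => (hJ.1 hx).1⟩, ⟨1, fun x hx => (hJ.1 hx).2⟩⟩
  set α := sInf J
  set β := sSup J
  have hα : 0 ≤ α := le_csInf hJne fun x hx => (hJ.1 hx).1
  have hβ : β ≤ 1 := csSup_le hJne fun x hx => (hJ.1 hx).2
  have hαβ : α ≤ β := csInf_le_csSup hJne hbdd.1 hbdd.2
  have hlen : (volume J).toReal ≤ β - α := by
    refine ENNReal.toReal_le_of_le_ofReal (by linarith) ?_
    rw [← Real.volume_Icc]
    exact measure_mono (subset_Icc_csInf_csSup hbdd.1 hbdd.2)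
  have hIoo : Set.Ioo α β ⊆ J :=
    IsConnected.Ioo_csInf_csSup_subset ⟨hJne, hJ.2.isPreconnected⟩ hbdd.1 hbdd.2
  have hM : (0 : ℝ) < M := by
    by_contra! h
    nlinarith [ENNReal.toReal_nonneg (a := volume J), (Nat.cast_nonneg M : (0 : ℝ) ≤ M)]
  have hcover : (M : ℝ) * (β - α) ≤ (⌈M * β⌉₊ : ℝ) - ⌊M * α⌋₊ := by
    linarith [Nat.le_ceil ((M : ℝ) * β), Nat.floor_le (by positivity : (0 : ℝ) ≤ M * α)]
  have hgap : ⌊M * α⌋₊ + 2 ≤ ⌈M * β⌉₊ := by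
    have : (⌊M * α⌋₊ : ℝ) + 1 < ⌈M * β⌉₊ := by nlinarith
    exact_mod_cast this
  have hceil : ⌈M * β⌉₊ ≤ M := Nat.ceil_le.2 (by nlinarith)
  refine ⟨(⌊M * α⌋₊ + 1, ⌈M * β⌉₊ - 1), mem_gridPairs.2 ⟨by omega, by omega, by omega⟩, ?_, ?_⟩
  · have : gridWidth (⌊M * α⌋₊ + 1, ⌈M * β⌉₊ - 1) = ⌈M * β⌉₊ - ⌊M * α⌋₊ := by
      unfold gridWidth; omega
    rw [this, Nat.cast_sub (by omega)]
    nlinarith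
  · intro j hj
    rw [mem_Icc] at hj
    have h1 : (M : ℝ) * α < j := (Nat.floor_lt (by positivity)).1 (by omega)
    have h2 : (j : ℝ) < M * β := Nat.lt_ceil.1 (by omega)
    exact hIoo ⟨by rw [lt_div_iff₀ hM]; linarith, by rw [div_lt_iff₀ hM]; linarith⟩

theorem exists_mem_testBoxes_forall_mem_pi {M d : ℕ} {I : Fin d → Set ℝ}
    (hI : ∀ ℓ, IsIntervalIn01 (I ℓ)) (hvol : 1 < M * (volume (Set.pi Set.univ I)).toReal) :
    ∃ c ∈ testBoxes M d, ∀ j ∈ idxBox c, (fun ℓ => (j ℓ : ℝ) / M) ∈ Set.pi Set.univ I := by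
  set L : Fin d → ℝ := fun ℓ => (volume (I ℓ)).toReal
  rw [volume_pi_pi, ENNReal.toReal_prod] at hvol
  have hL0 : ∀ ℓ, 0 ≤ L ℓ := fun ℓ => ENNReal.toReal_nonneg
  have hM : (0 : ℝ) < M := by
    by_contra! h
    nlinarith [prod_nonneg fun ℓ (_ : ℓ ∈ univ) => hL0 ℓ, (Nat.cast_nonneg M : (0 : ℝ) ≤ M)]
  have hL1 : ∀ ℓ, L ℓ ≤ 1 := fun ℓ => by
    refine ENNReal.toReal_le_of_le_ofReal zero_le_one ?_
    simpa using measure_mono (μ := volume) (hI ℓ).1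
  have hcoord : ∀ ℓ, 1 < M * L ℓ := fun ℓ => by
    have : ∏ ℓ', L ℓ' ≤ L ℓ := by
      rw [← mul_prod_erase univ L (mem_univ ℓ)]
      exact mul_le_of_le_one_right (hL0 ℓ) (prod_le_one (fun _ _ => hL0 _) fun _ _ => hL1 _)
    nlinarith
  choose q hq hwidth hmem using fun ℓ => exists_mem_gridPairs_forall_div_mem (hI ℓ) (hcoord ℓ)
  refine ⟨q, mem_filter.2 ⟨mem_piFinset.2 hq, ?_⟩, fun j hj => Set.mem_univ_pi.2 fun ℓ =>
    hmem ℓ (j ℓ) (mem_piFinset.1 hj ℓ)⟩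
  have : (M : ℝ) ^ d < M * ∏ ℓ, (gridWidth (q ℓ) : ℝ) :=
    calc (M : ℝ) ^ d < M * (M ^ d * ∏ ℓ, L ℓ) := by nlinarith [pow_pos hM d]
      _ = M * ∏ ℓ, (M * L ℓ) := by rw [prod_mul_distrib, prod_const, card_univ, Fintype.card_fin]
      _ ≤ M * ∏ ℓ, (gridWidth (q ℓ) : ℝ) := by
          gcongr with ℓ
          exact hwidth ℓ
  exact_mod_cast this

end Geometry

theorem card_testBoxes_mul_choose_mul_pow_lt_one {m d n k : ℕ} (hd : 1 ≤ d) (hkn : 2 * k < n)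
    (hcond : (n : ℝ) / 2 ^ (m + 4) ≥
      m * 2 ^ m * Real.log (2 ^ (m + 3) * d) +
        Real.log (2 * (n : ℝ) ^ k / (Nat.factorial (k - 1)))) :
    #(testBoxes (2 ^ m) d) * n.choose k * (1 - (8 * ((2 ^ m : ℕ) : ℝ))⁻¹) ^ (n - k) < 1 := by
  set K : ℝ := 2 ^ (m + 3) * d
  set T : ℝ := (n : ℝ) / 2 ^ (m + 4)
  set p : ℝ := (8 * ((2 ^ m : ℕ) : ℝ))⁻¹
  have hp0 : 0 < p := by positivity
  have hp1 : p ≤ 1 := inv_le_one_of_one_le₀ <| by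
    push_cast; nlinarith [one_le_pow₀ (one_le_two : (1 : ℝ) ≤ 2) (n := m)]
  have hchoose : (n.choose k : ℝ) ≤ n ^ k / (k - 1).factorial :=
    (Nat.choose_le_pow_div k n).trans <| div_le_div_of_nonneg_left (by positivity)
      (by positivity) (by exact_mod_cast Nat.factorial_le (Nat.sub_le k 1))
  have hgrowth : 2 * K ^ (m * 2 ^ m) * (n ^ k / (k - 1).factorial) ≤ Real.exp T :=
    calc 2 * K ^ (m * 2 ^ m) * (n ^ k / (k - 1).factorial)
        = Real.exp (m * 2 ^ m * Real.log K + Real.log (2 * (n : ℝ) ^ k / (k - 1).factorial)) := by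
          have hn : (0 : ℝ) < n := by exact_mod_cast (show 0 < n by omega)
          rw [Real.exp_add, Real.exp_log (by positivity), show (m : ℝ) * 2 ^ m = (m * 2 ^ m : ℕ) by
            push_cast; ring, Real.exp_nat_mul, Real.exp_log (by positivity)]
          ring
      _ ≤ Real.exp T := Real.exp_le_exp.2 hcond
  have hdecay : (1 - p) ^ (n - k) < Real.exp (-T) := by
    refine (one_sub_pow_lt_exp_neg hp0 hp1 (by omega)).trans_le (Real.exp_le_exp.2 ?_)
    have hT : T = n / 2 * p := by simp only [T, p, pow_add]; push_cast; field_simp; ring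
    have : (n : ℝ) / 2 ≤ (n - k : ℕ) := by
      have : (2 * k : ℝ) < n := by exact_mod_cast hkn
      push_cast [show k ≤ n by omega]
      linarith
    rw [hT, neg_le_neg_iff]
    gcongr
  calc #(testBoxes (2 ^ m) d) * n.choose k * (1 - p) ^ (n - k)
      ≤ 2 * K ^ (m * 2 ^ m) * (n ^ k / (k - 1).factorial) * (1 - p) ^ (n - k) := by
        have : 0 ≤ (1 - p) ^ (n - k) := pow_nonneg (by linarith) _
        gcongr
        exact card_testBoxes_le hd
    _ < Real.exp T * Real.exp (-T) :=
        (mul_le_mul_of_nonneg_right hgrowth (pow_nonneg (by linarith) _)).trans_lt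
          (mul_lt_mul_of_pos_left hdecay (Real.exp_pos T))
    _ = 1 := by rw [← Real.exp_add, add_neg_cancel, Real.exp_zero]

theorem kdispM_le_of_forall_lt_card {d k : ℕ} {X : Multiset (Fin d → ℝ)} {v : ℝ} (hv : 0 ≤ v)
    (hX : ∀ I : Fin d → Set ℝ, (∀ ℓ, IsIntervalIn01 (I ℓ)) →
      v < (volume (Set.pi Set.univ I)).toReal →
      k < Multiset.card (X.filter fun x => x ∈ Set.pi Set.univ I)) :
    kdispM d k X ≤ v := by
  refine Real.sSup_le ?_ hv
  rintro _ ⟨a, b, hab, hcard, rfl⟩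
  by_contra! hlt
  have hI : ∀ ℓ, IsIntervalIn01 (Set.Ioo (a ℓ) (b ℓ)) := fun ℓ =>
    ⟨fun x hx => ⟨(hab ℓ).1.trans hx.1.le, hx.2.le.trans (hab ℓ).2.2⟩, Set.ordConnected_Ioo⟩
  have hvol : (volume (Set.pi Set.univ fun ℓ => Set.Ioo (a ℓ) (b ℓ))).toReal
      = ∏ ℓ, (b ℓ - a ℓ) := by
    simp [volume_pi_pi, ENNReal.toReal_prod, Real.volume_Ioo, (hab _).2.1]
  have := hX _ hI (hvol ▸ hlt)
  simp only [Set.mem_univ_pi] at this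
  omega

theorem statement_8_general (m d n k : ℕ) (hm : 1 ≤ m) (hd : 1 ≤ d) (hkn : 2 * k < n)
    (hcond : (n : ℝ) / 2 ^ (m + 4) ≥
      m * 2 ^ m * Real.log (2 ^ (m + 3) * d) +
        Real.log (2 * (n : ℝ) ^ k / (Nat.factorial (k - 1)))) :
    ∃ X : Multiset (Fin d → ℝ), Multiset.card X = n ∧ (∀ x ∈ X, x ∈ Ggrid m d) ∧
      (∀ I : Fin d → Set ℝ, (∀ ℓ, IsIntervalIn01 (I ℓ)) →
        ((2:ℝ) ^ m)⁻¹ < (volume (Set.pi Set.univ I)).toReal →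
        k < Multiset.card (X.filter fun x => x ∈ Set.pi Set.univ I)) ∧
      kdispM d k X ≤ ((2:ℝ) ^ m)⁻¹ := by
  have hG : (idxGrid (2 ^ m) d).Nonempty :=
    piFinset_nonempty.2 fun _ => nonempty_Icc.2 <| by
      have := Nat.pow_le_pow_right two_pos hm; omega
  obtain ⟨f, hfG, hf⟩ := exists_forall_lt_card_filter_mem hG (by omega)
    (fun _ => idxBox_subset_idxGrid) (fun _ => inv_mul_card_idxGrid_le_card_idxBox)
    (card_testBoxes_mul_choose_mul_pow_lt_one hd hkn hcond)
  set X : Multiset (Fin d → ℝ) := (univ : Finset (Fin n)).val.map fun i ℓ => (f i ℓ : ℝ) / 2 ^ m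
  have hX : ∀ I : Fin d → Set ℝ, (∀ ℓ, IsIntervalIn01 (I ℓ)) →
      ((2:ℝ) ^ m)⁻¹ < (volume (Set.pi Set.univ I)).toReal →
      k < Multiset.card (X.filter fun x => x ∈ Set.pi Set.univ I) := by
    intro I hI hvol
    rw [inv_lt_iff_one_lt_mul₀' (by positivity)] at hvol
    obtain ⟨c, hc, hcI⟩ :=
      exists_mem_testBoxes_forall_mem_pi hI (M := 2 ^ m) (by exact_mod_cast hvol)
    calc k < #{i | f i ∈ idxBox c} := hf c hc
      _ ≤ #{i | (fun ℓ => (f i ℓ : ℝ) / 2 ^ m) ∈ Set.pi Set.univ I} :=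
          card_le_card <| monotone_filter_right _ fun i _ hi => by simpa using hcI _ hi
      _ = Multiset.card (X.filter fun x => x ∈ Set.pi Set.univ I) := by
          simp only [X, Multiset.filter_map, Multiset.card_map]
          rfl
  refine ⟨X, by simp [X], ?_, hX, kdispM_le_of_forall_lt_card (by positivity) hX⟩
  simp only [X, Multiset.mem_map]
  rintro _ ⟨i, -, rfl⟩
  exact mem_piFinset.2 fun ℓ => mem_image_of_mem _ (mem_piFinset.1 (mem_piFinset.1 hfG i) ℓ)

/-- If `n · 2^{-m-4} ≥ m · 2^m · log(2^{m+3} d) + log(2 n^k/(k-1)!)` (with `1 ≤ k < n/2`),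
then there exists a multiset `𝕏 ⊆ 𝕄_m^d` of cardinality `n` such that every axis-parallel
box `B ⊆ [0,1]^d` with `vol_d(B) > 2^{-m}` contains more than `k` points of `𝕏`; in
particular `k-dispₘ(𝕏,d) ≤ 2^{-m}`. -/
theorem statement_8 (m d n k : ℕ) (hm : 1 ≤ m) (hd : 1 ≤ d) (hk : 1 ≤ k) (hkn : 2 * k < n)
    (hcond : (n : ℝ) / 2 ^ (m + 4) ≥
      m * 2 ^ m * Real.log (2 ^ (m + 3) * d) +
        Real.log (2 * (n : ℝ) ^ k / (Nat.factorial (k - 1)))) :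
    ∃ X : Multiset (Fin d → ℝ), Multiset.card X = n ∧ (∀ x ∈ X, x ∈ Ggrid m d) ∧
      (∀ I : Fin d → Set ℝ, (∀ ℓ, IsIntervalIn01 (I ℓ)) →
        ((2:ℝ) ^ m)⁻¹ < (volume (Set.pi Set.univ I)).toReal →
        k < Multiset.card (X.filter fun x => x ∈ Set.pi Set.univ I)) ∧
      kdispM d k X ≤ ((2:ℝ) ^ m)⁻¹ :=
  statement_8_general m d n k hm hd hkn hcond
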